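/- Let n, r ≥ 1 and k₁, …, k_r ≥ 1 be natural numbers with k₁ + ⋯ + k_r ≤ n + 1. Let ℓ₁, …, ℓ_r be nonzero, pairwise non-proportional linear forms in ℂ[X,Y], and for each i let m_i be a nonzero linear form non-proportional to ℓ_i. Then the binary forms {ℓ_i^{n−j} m_i^j : 1 ≤ i ≤ r, 0 ≤ j ≤ k_i − 1} are linearly independent over ℂ. -/

import Mathlib

open MvPolynomial

/-- The linear form `a*X + b*Y` in `ℂ[X,Y]`. -/
noncomputable def lin (a b : ℂ) : MvPolynomial (Fin 2) ℂ :=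
  MvPolynomial.C a * MvPolynomial.X 0 + MvPolynomial.C b * MvPolynomial.X 1

/-- The partial derivative `∂_X` (for `i = 0`) or `∂_Y` (for `i = 1`) as a linear map. -/
noncomputable def pd (i : Fin 2) :
    MvPolynomial (Fin 2) ℂ →ₗ[ℂ] MvPolynomial (Fin 2) ℂ :=
  (MvPolynomial.pderiv i).toLinearMap

/-- The apolarity operator `q(∂) = Σ q_{ij} ∂_X^i ∂_Y^j`, as a linear map on `ℂ[X,Y]`. -/
noncomputable def apolarL (q : MvPolynomial (Fin 2) ℂ) :
    MvPolynomial (Fin 2) ℂ →ₗ[ℂ] MvPolynomial (Fin 2) ℂ :=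
  q.support.sum fun m => q.coeff m • (pd 0 ^ m 0 * pd 1 ^ m 1)

/-- The apolarity pairing `⟨q, p⟩`: the value of the constant polynomial `q(∂)p`. -/
noncomputable def pairing (q p : MvPolynomial (Fin 2) ℂ) : ℂ :=
  MvPolynomial.coeff 0 (apolarL q p)

/-! With `ℓ = aX + bY`, the derivation `D_ℓ = b ∂_X - a ∂_Y` kills `ℓ` and sends every linear form
to a constant, nonzero exactly on the forms not proportional to `ℓ`. Hence `D_{ℓ_i}^{k_i}`
annihilates every `ℓ_i^s m_i^t` with `t < k_i`, and `E = ∏_{i ≠ i₀} D_{ℓ_i}^{k_i}` kills all blocks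
but the `i₀`-th, while multiplying `ℓ_{i₀}^s` by a nonzero scalar (times a lower power of `ℓ_{i₀}`)
as long as `s ≥ ∑_{i ≠ i₀} k_i`, which `∑ k_i ≤ n + 1` guarantees. Then `E ∘ D_{ℓ_{i₀}}^j` kills
`ℓ_{i₀}^{n-t} m_{i₀}^t` for `t < j` but not for `t = j`: the family is triangular. -/

theorem linearIndependent_of_triangular {K M N ι : Type*} [DivisionRing K] [AddCommGroup M]
    [Module K M] [AddCommGroup N] [Module K N] [Fintype ι] [Preorder ι] (v : ι → M)
    (hT : ∀ p, ∃ T : M →ₗ[K] N, T (v p) ≠ 0 ∧ ∀ q, q ≠ p → ¬ p < q → T (v q) = 0) :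
    LinearIndependent K v := by
  rw [Fintype.linearIndependent_iff]
  intro g hg p
  induction p using WellFoundedGT.induction with
  | _ p ih =>
    obtain ⟨T, hp, hq⟩ := hT p
    have hTg := congrArg T hg
    rw [map_sum, map_zero, Finset.sum_eq_single p] at hTg
    · exact (smul_eq_zero.mp (by simpa using hTg)).resolve_right hp
    · intro q _ hqp
      by_cases hpq : p < q
      · simp [ih q hpq]
      · simp [hq q hqp hpq]
    · simp

def powMulPowSpan (R : Type*) {A : Type*} [CommRing R] [CommRing A] [Algebra R A] (p q : A)
    (K : ℕ) : Submodule R A :=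
  Submodule.span R {f | ∃ s t, t < K ∧ f = p ^ s * q ^ t}

namespace Derivation

variable {R A : Type*} [CommRing R] [CommRing A] [Algebra R A] (D : Derivation R A A)

theorem pow_toLinearMap_mul_of_eq_zero {p : A} (hp : D p = 0) (u : ℕ) (f : A) :
    (D.toLinearMap ^ u) (p * f) = p * (D.toLinearMap ^ u) f := by
  induction u with
  | zero => rfl
  | succ u ih =>
    rw [pow_succ', Module.End.mul_apply, ih, Module.End.mul_apply]
    simp [leibniz, hp]

theorem pow_toLinearMap_pow {q : A} {γ : R} (hq : D q = algebraMap R A γ) (u t : ℕ) :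
    (D.toLinearMap ^ u) (q ^ t) = ((t.descFactorial u : R) * γ ^ u) • q ^ (t - u) := by
  induction u with
  | zero => simp
  | succ u ih =>
    rw [pow_succ', Module.End.mul_apply, ih, coeFn_coe, D.map_smul, leibniz_pow, hq,
      Nat.descFactorial_succ, Nat.sub_sub]
    simp only [nsmul_eq_mul, smul_eq_mul]
    simp only [Algebra.smul_def, Nat.cast_mul, map_mul, map_pow, _root_.map_natCast]
    ring

theorem pow_toLinearMap_pow_mul_pow_of_lt {p q : A} {γ : R} (hp : D p = 0)
    (hq : D q = algebraMap R A γ) (s : ℕ) {t u : ℕ} (htu : t < u) :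
    (D.toLinearMap ^ u) (p ^ s * q ^ t) = 0 := by
  rw [pow_toLinearMap_mul_of_eq_zero D (by simp [leibniz_pow, hp]), pow_toLinearMap_pow D hq,
    Nat.descFactorial_eq_zero_iff_lt.mpr htu]
  simp

theorem pow_toLinearMap_pow_mul_pow_self {p q : A} {γ : R} (hp : D p = 0)
    (hq : D q = algebraMap R A γ) (s t : ℕ) :
    (D.toLinearMap ^ t) (p ^ s * q ^ t) = ((t.factorial : R) * γ ^ t) • p ^ s := by
  rw [pow_toLinearMap_mul_of_eq_zero D (by simp [leibniz_pow, hp]), pow_toLinearMap_pow D hq,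
    Nat.descFactorial_self, Nat.sub_self, pow_zero, mul_smul_comm, mul_one]

theorem mapsTo_powMulPowSpan {p q : A} {α γ : R} (hp : D p = algebraMap R A α)
    (hq : D q = algebraMap R A γ) (K : ℕ) :
    Set.MapsTo D (powMulPowSpan R p q K) (powMulPowSpan R p q K) := by
  change powMulPowSpan R p q K ≤ (powMulPowSpan R p q K).comap D.toLinearMap
  refine Submodule.span_le.mpr ?_
  rintro _ ⟨s, t, ht, rfl⟩
  have hD : D (p ^ s * q ^ t) = (t * γ : R) • (p ^ s * q ^ (t - 1)) +
      (s * α : R) • (p ^ (s - 1) * q ^ t) := by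
    rw [leibniz, leibniz_pow, leibniz_pow, hp, hq]
    simp only [nsmul_eq_mul, smul_eq_mul]
    simp only [Algebra.smul_def, map_mul, _root_.map_natCast]
    ring
  simp only [SetLike.mem_coe, Submodule.mem_comap, coeFn_coe, hD]
  exact add_mem (Submodule.smul_mem _ _ (Submodule.subset_span ⟨s, t - 1, by omega, rfl⟩))
    (Submodule.smul_mem _ _ (Submodule.subset_span ⟨s - 1, t, ht, rfl⟩))

theorem powMulPowSpan_le_ker {p q : A} {γ : R} (hp : D p = 0) (hq : D q = algebraMap R A γ)
    (K : ℕ) : powMulPowSpan R p q K ≤ LinearMap.ker (D.toLinearMap ^ K) := by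
  refine Submodule.span_le.mpr ?_
  rintro _ ⟨s, t, ht, rfl⟩
  exact pow_toLinearMap_pow_mul_pow_of_lt D hp hq s ht

end Derivation

theorem Derivation.exists_annihilator {R A ι : Type*} [Field R] [CharZero R] [CommRing A]
    [Algebra R A] (D : ι → Derivation R A A) (k : ι → ℕ) (W : ι → Submodule R A)
    (hW : ∀ i j, Set.MapsTo (D j) (W i) (W i))
    (hker : ∀ i, W i ≤ LinearMap.ker ((D i).toLinearMap ^ k i))
    {ℓ : A} (S : Finset ι) (hℓ : ∀ i ∈ S, ∃ α : R, α ≠ 0 ∧ D i ℓ = algebraMap R A α) :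
    ∃ E : Module.End R A, (∀ i ∈ S, W i ≤ LinearMap.ker E) ∧
      ∀ s, ∑ i ∈ S, k i ≤ s → ∃ c : R, c ≠ 0 ∧ E (ℓ ^ s) = c • ℓ ^ (s - ∑ i ∈ S, k i) := by
  induction S using Finset.cons_induction with
  | empty => exact ⟨1, by simp, fun s _ => ⟨1, one_ne_zero, by simp⟩⟩
  | cons i S hiS ih =>
    obtain ⟨E, hEW, hEℓ⟩ := ih fun j hj => hℓ j (Finset.mem_cons_of_mem hj)
    obtain ⟨α, hα, hDℓ⟩ := hℓ i (Finset.mem_cons_self i S)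
    refine ⟨E * (D i).toLinearMap ^ k i, ?_, ?_⟩
    · intro j hj w hw
      rw [LinearMap.mem_ker, Module.End.mul_apply]
      rcases Finset.mem_cons.mp hj with rfl | hj
      · rw [hker j hw, map_zero]
      · apply hEW j hj
        rw [Module.End.coe_pow]
        exact (hW j i).iterate (k i) hw
    · intro s hs
      rw [Finset.sum_cons] at hs ⊢
      obtain ⟨c, hc, hEc⟩ := hEℓ (s - k i) (by omega)
      refine ⟨c * ((s.descFactorial (k i) : R) * α ^ k i), ?_, ?_⟩
      · refine mul_ne_zero hc (mul_ne_zero ?_ (pow_ne_zero _ hα))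
        exact Nat.cast_ne_zero.mpr (Nat.descFactorial_eq_zero_iff_lt.not.mpr (by omega))
      · rw [Module.End.mul_apply, pow_toLinearMap_pow (D i) hDℓ, _root_.map_smul, hEc, smul_smul,
          mul_comm, Nat.sub_sub]

local notation "ℂ[X,Y]" => MvPolynomial (Fin 2) ℂ

noncomputable def linDeriv (a b : ℂ) : Derivation ℂ ℂ[X,Y] ℂ[X,Y] :=
  b • pderiv 0 - a • pderiv 1

theorem linDeriv_lin (a b a' b' : ℂ) :
    linDeriv a b (lin a' b') = algebraMap ℂ ℂ[X,Y] (b * a' - a * b') := by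
  simp [linDeriv, lin, pderiv_X, smul_eq_C_mul]

theorem linDeriv_lin_self (a b : ℂ) : linDeriv a b (lin a b) = 0 := by
  rw [linDeriv_lin, mul_comm, sub_self, map_zero]

theorem smul_lin (t a b : ℂ) : t • lin a b = lin (t * a) (t * b) := by
  simp only [lin, smul_eq_C_mul, C_mul]
  ring

theorem lin_ne_zero {a b : ℂ} (h : (a, b) ≠ (0, 0)) : lin a b ≠ 0 := by
  intro h0
  have ha := congrArg (eval ![1, 0]) h0
  have hb := congrArg (eval ![0, 1]) h0
  simp [lin] at ha hb
  simp [ha, hb] at h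

theorem det_ne_zero_of_forall_lin_ne_smul {a b a' b' : ℂ} (h : (a, b) ≠ (0, 0))
    (h' : ∀ t : ℂ, lin a' b' ≠ t • lin a b) : b * a' - a * b' ≠ 0 := by
  intro hdet
  by_cases ha : a = 0
  · have hb : b ≠ 0 := by rintro rfl; exact h (by rw [ha])
    refine h' (b' / b) ?_
    rw [smul_lin, ha, div_mul_cancel₀ b' hb, mul_zero]
    congr
    simpa [ha, hb] using hdet
  · refine h' (a' / a) ?_
    rw [smul_lin, div_mul_cancel₀ a' ha]
    congr
    field_simp
    linear_combination -hdet

theorem osculating_planes_linearIndependent_general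
    (n r : ℕ) (k : Fin r → ℕ)
    (hsum : ∑ i, k i ≤ n + 1)
    (a b c d : Fin r → ℂ)
    (hl : ∀ i, (a i, b i) ≠ (0, 0))
    (hprop : ∀ i j, i ≠ j → ∀ t : ℂ, lin (a i) (b i) ≠ t • lin (a j) (b j))
    (hmprop : ∀ i, ∀ t : ℂ, lin (c i) (d i) ≠ t • lin (a i) (b i)) :
    LinearIndependent ℂ (fun p : Σ i : Fin r, Fin (k i) =>
      lin (a p.1) (b p.1) ^ (n - (p.2 : ℕ)) * lin (c p.1) (d p.1) ^ (p.2 : ℕ)) := by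
  set D := fun i => linDeriv (a i) (b i)
  set W := fun i => powMulPowSpan ℂ (lin (a i) (b i)) (lin (c i) (d i)) (k i)
  have hW (i j) : Set.MapsTo (D j) (W i) (W i) :=
    (D j).mapsTo_powMulPowSpan (linDeriv_lin ..) (linDeriv_lin ..) _
  have hker (i) : W i ≤ LinearMap.ker ((D i).toLinearMap ^ k i) :=
    (D i).powMulPowSpan_le_ker (linDeriv_lin_self ..) (linDeriv_lin ..) _
  refine linearIndependent_of_triangular (N := ℂ[X,Y]) _ ?_
  rintro ⟨i₀, j⟩
  obtain ⟨E, hEW, hEℓ⟩ := Derivation.exists_annihilator D k W hW hker (Finset.univ.erase i₀)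
    fun i hi => ⟨_, det_ne_zero_of_forall_lin_ne_smul (hl i)
      (hprop i₀ i (Finset.ne_of_mem_erase hi).symm), linDeriv_lin ..⟩
  refine ⟨E * (D i₀).toLinearMap ^ (j : ℕ), ?_, ?_⟩
  · have hK := Finset.sum_erase_add _ k (Finset.mem_univ i₀)
    obtain ⟨e, he, hEe⟩ := hEℓ (n - j) (by omega)
    have hβ := det_ne_zero_of_forall_lin_ne_smul (hl i₀) (hmprop i₀)
    rw [Module.End.mul_apply, (D i₀).pow_toLinearMap_pow_mul_pow_self (linDeriv_lin_self ..)
      (linDeriv_lin ..), map_smul, hEe, smul_smul]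
    simp [he, hβ, lin_ne_zero (hl i₀), Nat.factorial_ne_zero]
  · rintro ⟨i, t⟩ hne hlt
    rw [Module.End.mul_apply]
    by_cases hi : i = i₀
    · subst hi
      rw [Sigma.mk_lt_mk_iff, not_lt] at hlt
      have htj : t < j := lt_of_le_of_ne hlt fun h => hne (by rw [h])
      rw [(D i).pow_toLinearMap_pow_mul_pow_of_lt (linDeriv_lin_self ..) (linDeriv_lin ..) _ htj,
        map_zero]
    · refine hEW i (Finset.mem_erase.mpr ⟨hi, Finset.mem_univ i⟩) ?_
      rw [Module.End.coe_pow]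
      exact (hW i i₀).iterate _ (Submodule.subset_span ⟨_, t, t.isLt, rfl⟩)

/-- Confluent Vandermonde independence: the forms ℓ_i^(n−j) * m_i^j for 1 ≤ i ≤ r and
0 ≤ j ≤ k_i − 1 are linearly independent when k_1 + ⋯ + k_r ≤ n + 1. -/
theorem osculating_planes_linearIndependent
    (n r : ℕ) (hn : 1 ≤ n) (hr : 1 ≤ r) (k : Fin r → ℕ) (hk : ∀ i, 1 ≤ k i)
    (hsum : ∑ i, k i ≤ n + 1)
    (a b c d : Fin r → ℂ)
    (hl : ∀ i, (a i, b i) ≠ (0, 0))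
    (hm : ∀ i, (c i, d i) ≠ (0, 0))
    (hprop : ∀ i j, i ≠ j → ∀ t : ℂ, lin (a i) (b i) ≠ t • lin (a j) (b j))
    (hmprop : ∀ i, ∀ t : ℂ, lin (c i) (d i) ≠ t • lin (a i) (b i)) :
    LinearIndependent ℂ (fun p : Σ i : Fin r, Fin (k i) =>
      lin (a p.1) (b p.1) ^ (n - (p.2 : ℕ)) * lin (c p.1) (d p.1) ^ (p.2 : ℕ)) :=
  osculating_planes_linearIndependent_general n r k hsum a b c d hl hprop hmprop
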